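/- arXiv:1702.03861 — 9 statements merged into one kernel-verified Lean document; each statement's English description precedes it below -/
import Mathlib

section
/- For all positive integers x, y, z, the equation x + y = z holds if and only if (z·x + 1)·(z·y + 1) = z²·(x·y + 1) + 1. -/
theorem robinson_identity (x y z : ℕ) (hx : 0 < x) (hy : 0 < y) (hz : 0 < z) :
    x + y = z ↔ (z * x + 1) * (z * y + 1) = z ^ 2 * (x * y + 1) + 1 := by
  constructor
  · rintro rfl; ring
  · intro h
    have : z * (x + y) = z * z := by nlinarith [h]
    have := Nat.eq_of_mul_eq_mul_left hz this
    nlinarith [this]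
end

section
/- For every integer n ≥ 3, the system consisting of the equations x₁ · x₁ = x₁, x₁ + 1 = x₂, and xᵢ · xᵢ = x_{i+1} for all i ∈ {2, …, n−1} has a unique solution in positive integers x₁, …, xₙ, namely xᵢ = 2^(2^(i−2)) for i ≥ 2 and x₁ = 1; in particular xₙ = 2^(2^(n−2)). -/
theorem tower_system_unique (n : ℕ) (hn : 3 ≤ n) :
    (∃! x : Fin n → ℕ, (∀ i, 0 < x i) ∧
      x ⟨0, by omega⟩ * x ⟨0, by omega⟩ = x ⟨0, by omega⟩ ∧
      x ⟨0, by omega⟩ + 1 = x ⟨1, by omega⟩ ∧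
      ∀ i : Fin n, 1 ≤ (i : ℕ) → (hi : (i : ℕ) + 1 < n) →
        x i * x i = x ⟨(i : ℕ) + 1, hi⟩) ∧
    ((∀ i, 0 < (fun i : Fin n => if (i : ℕ) = 0 then 1 else 2 ^ 2 ^ ((i : ℕ) - 1)) i) ∧
      (fun i : Fin n => if (i : ℕ) = 0 then 1 else 2 ^ 2 ^ ((i : ℕ) - 1)) ⟨0, by omega⟩ *
        (fun i : Fin n => if (i : ℕ) = 0 then 1 else 2 ^ 2 ^ ((i : ℕ) - 1)) ⟨0, by omega⟩ =
        (fun i : Fin n => if (i : ℕ) = 0 then 1 else 2 ^ 2 ^ ((i : ℕ) - 1)) ⟨0, by omega⟩ ∧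
      (fun i : Fin n => if (i : ℕ) = 0 then 1 else 2 ^ 2 ^ ((i : ℕ) - 1)) ⟨0, by omega⟩ + 1 =
        (fun i : Fin n => if (i : ℕ) = 0 then 1 else 2 ^ 2 ^ ((i : ℕ) - 1)) ⟨1, by omega⟩ ∧
      ∀ i : Fin n, 1 ≤ (i : ℕ) → (hi : (i : ℕ) + 1 < n) →
        (fun i : Fin n => if (i : ℕ) = 0 then 1 else 2 ^ 2 ^ ((i : ℕ) - 1)) i *
          (fun i : Fin n => if (i : ℕ) = 0 then 1 else 2 ^ 2 ^ ((i : ℕ) - 1)) i =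
          (fun i : Fin n => if (i : ℕ) = 0 then 1 else 2 ^ 2 ^ ((i : ℕ) - 1)) ⟨(i : ℕ) + 1, hi⟩) ∧
    (fun i : Fin n => if (i : ℕ) = 0 then 1 else 2 ^ 2 ^ ((i : ℕ) - 1)) ⟨n - 1, by omega⟩ =
      2 ^ 2 ^ (n - 2) := by
  set f : Fin n → ℕ := fun i : Fin n => if (i : ℕ) = 0 then 1 else 2 ^ 2 ^ ((i : ℕ) - 1) with hfdef
  have hpos : ∀ i, 0 < f i := by
    intro i
    simp only [hfdef]
    split <;> positivity
  have h0 : f ⟨0, by omega⟩ = 1 := by simp [hfdef]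
  have h1 : f ⟨1, by omega⟩ = 2 := by simp [hfdef]
  have hrec : ∀ i : Fin n, 1 ≤ (i : ℕ) → (hi : (i : ℕ) + 1 < n) →
      f i * f i = f ⟨(i : ℕ) + 1, hi⟩ := by
    intro i h1i hi
    simp only [hfdef]
    rw [if_neg (by omega), if_neg (by omega), ← pow_add, ← two_mul, Nat.add_sub_cancel]
    congr 1
    rw [← pow_succ']
    congr 1
    omega
  have hsat : (∀ i, 0 < f i) ∧ f ⟨0, by omega⟩ * f ⟨0, by omega⟩ = f ⟨0, by omega⟩ ∧
      f ⟨0, by omega⟩ + 1 = f ⟨1, by omega⟩ ∧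
      ∀ i : Fin n, 1 ≤ (i : ℕ) → (hi : (i : ℕ) + 1 < n) → f i * f i = f ⟨(i : ℕ) + 1, hi⟩ :=
    ⟨hpos, by rw [h0], by rw [h0, h1], hrec⟩
  refine ⟨⟨f, hsat, ?_⟩, hsat, ?_⟩
  · rintro y ⟨ypos, y0, y1, yrec⟩
    have key : ∀ k, (hk : k < n) → y ⟨k, hk⟩ = f ⟨k, hk⟩ := by
      intro k
      induction k using Nat.strong_induction_on with
      | _ k ih =>
        intro hk
        match k with
        | 0 =>
          rw [h0]
          have := ypos ⟨0, by omega⟩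
          nlinarith [y0]
        | 1 =>
          rw [h1, ← y1]
          have h00 : y ⟨0, by omega⟩ = 1 := by
            have := ypos ⟨0, by omega⟩
            nlinarith [y0]
          omega
        | (m + 2) =>
          have hm : m + 1 < n := by omega
          have hy := yrec ⟨m + 1, hm⟩ (by simp) (by simpa using hk)
          have hf := hrec ⟨m + 1, hm⟩ (by simp) (by simpa using hk)
          have ihm := ih (m + 1) (by omega) hm
          simp only at hy hf
          rw [← hy, ← hf, ihm]
    funext i
    exact key i.val i.isLt
  · simp only [hfdef]
    rw [if_neg (by omega), show n - 1 - 1 = n - 2 from by omega]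
end

section
/- Let n be a positive integer such that 2^(2^n) + 1 is prime. If positive integers x₁ and x_{n+5} satisfy x₁^(2^n) + 1 = (x₁ + 2) · x_{n+5}, then x₁ = 2^(2^n) − 1. -/
theorem fermat_prime_forces (n : ℕ) (hn : 0 < n) (hp : Nat.Prime (2 ^ 2 ^ n + 1))
    (x v : ℕ) (hx : 0 < x) (hv : 0 < v) (h : x ^ 2 ^ n + 1 = (x + 2) * v) :
    x = 2 ^ 2 ^ n - 1 := by
  have hdvdZ : ((x : ℤ) + 2) ∣ (x : ℤ) ^ 2 ^ n + 1 := ⟨v, by exact_mod_cast h⟩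
  have h1 : ((x : ℤ) + 2) ∣ (x : ℤ) ^ 2 ^ n - (-2) ^ 2 ^ n := by
    have := sub_dvd_pow_sub_pow (x : ℤ) (-2) (2 ^ n)
    simpa [sub_neg_eq_add] using this
  have heven : Even (2 ^ n) := by
    exact (Nat.even_pow.mpr ⟨even_two, hn.ne'⟩)
  have h2 : ((-2 : ℤ)) ^ 2 ^ n = 2 ^ 2 ^ n := heven.neg_pow 2
  have h3 : ((x : ℤ) + 2) ∣ (2 : ℤ) ^ 2 ^ n + 1 := by
    have := dvd_sub hdvdZ h1
    rw [h2] at this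
    have e : (x : ℤ) ^ 2 ^ n + 1 - ((x : ℤ) ^ 2 ^ n - 2 ^ 2 ^ n) = 2 ^ 2 ^ n + 1 := by ring
    rwa [e] at this
  have h4 : (x + 2) ∣ 2 ^ 2 ^ n + 1 := by
    have := h3
    rw [show ((x : ℤ) + 2) = ((x + 2 : ℕ) : ℤ) by push_cast; ring,
      show ((2 : ℤ) ^ 2 ^ n + 1) = ((2 ^ 2 ^ n + 1 : ℕ) : ℤ) by push_cast; ring] at this
    exact_mod_cast this
  rcases (hp.eq_one_or_self_of_dvd _ h4) with h5 | h5 <;> omega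
end

section
/- Let n be a positive integer with 2^(2^n) + 1 prime. The system in positive integer unknowns x₁, …, x_{n+5} given by: xᵢ · xᵢ = x_{i+1} for i ∈ {1, …, n}, x₁ + 1 = x_{n+2}, x_{n+2} + 1 = x_{n+3}, x_{n+1} + 1 = x_{n+4}, and x_{n+3} · x_{n+5} = x_{n+4}, has a unique solution in positive integers, and in that solution x_{n+4} = (2^(2^n) − 1)^(2^n) + 1 is the maximum of all the unknowns. -/
/-!
Write `a = x₁`. The squaring equations give `xᵢ = a ^ 2 ^ (i - 1)` for `i ≤ n + 1`, and the
remaining ones give `x_{n+3} = a + 2` and `x_{n+4} = a ^ 2 ^ n + 1`, so the last equation says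
exactly that `a + 2 ∣ a ^ 2 ^ n + 1`. Since `a ≡ -2 (mod a + 2)` and `2 ^ n` is even, this is
equivalent to `a + 2 ∣ 2 ^ 2 ^ n + 1`, and primality forces `a + 2 = 2 ^ 2 ^ n + 1`. The maximum is
`x_{n+4}` because the powers of `a` are at most `a ^ 2 ^ n`, while `x_{n+3}` and `x_{n+5}` divide
`x_{n+4}`.
-/

/-- The system of Theorem 3 in `n + 5` positive-integer unknowns (0-indexed):
`xᵢ · xᵢ = x_{i+1}` for `i ∈ {1,…,n}` (0-indexed `0,…,n-1`), `x₁ + 1 = x_{n+2}`,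
`x_{n+2} + 1 = x_{n+3}`, `x_{n+1} + 1 = x_{n+4}`, `x_{n+3} · x_{n+5} = x_{n+4}`. -/
def FermatSystem (n : ℕ) (x : Fin (n + 5) → ℕ) : Prop :=
  (∀ i, 0 < x i) ∧
  (∀ i : ℕ, (hi : i < n) → x ⟨i, by omega⟩ * x ⟨i, by omega⟩ = x ⟨i + 1, by omega⟩) ∧
  x ⟨0, by omega⟩ + 1 = x ⟨n + 1, by omega⟩ ∧
  x ⟨n + 1, by omega⟩ + 1 = x ⟨n + 2, by omega⟩ ∧
  x ⟨n, by omega⟩ + 1 = x ⟨n + 3, by omega⟩ ∧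
  x ⟨n + 2, by omega⟩ * x ⟨n + 4, by omega⟩ = x ⟨n + 3, by omega⟩

theorem add_two_dvd_pow_add_one_iff {a m : ℕ} (hm : Even m) :
    a + 2 ∣ a ^ m + 1 ↔ a + 2 ∣ 2 ^ m + 1 := by
  have hsub : ((a + 2 : ℕ) : ℤ) ∣ ((a ^ m + 1 : ℕ) : ℤ) - ((2 ^ m + 1 : ℕ) : ℤ) := by
    have h := sub_dvd_pow_sub_pow (a : ℤ) (-2) m
    rw [hm.neg_pow, sub_neg_eq_add] at h
    push_cast
    simpa using h
  rw [← Int.natCast_dvd_natCast, ← Int.natCast_dvd_natCast (m := a + 2)]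
  exact dvd_iff_dvd_of_dvd_sub hsub

theorem Fin.val_le_or_eq_last_four {n : ℕ} (i : Fin (n + 5)) :
    (i : ℕ) ≤ n ∨ i = ⟨n + 1, by omega⟩ ∨ i = ⟨n + 2, by omega⟩ ∨ i = ⟨n + 3, by omega⟩ ∨
      i = ⟨n + 4, by omega⟩ := by
  obtain ⟨i, hi⟩ := i
  simp only [Fin.mk.injEq]
  omega

def fermatTuple (n a : ℕ) (i : Fin (n + 5)) : ℕ :=
  if (i : ℕ) ≤ n then a ^ 2 ^ (i : ℕ)
  else if (i : ℕ) = n + 1 then a + 1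
  else if (i : ℕ) = n + 2 then a + 2
  else if (i : ℕ) = n + 3 then a ^ 2 ^ n + 1
  else (a ^ 2 ^ n + 1) / (a + 2)

namespace FermatSystem

variable {n : ℕ} {x : Fin (n + 5) → ℕ}

theorem eq_pow (hx : FermatSystem n x) (i : ℕ) (hi : i ≤ n) :
    x ⟨i, by omega⟩ = x 0 ^ 2 ^ i := by
  induction i with
  | zero => simp
  | succ k ih => rw [← hx.2.1 k hi, ih (by omega), ← sq, ← pow_mul, pow_succ]

theorem add_two_dvd (hx : FermatSystem n x) : x 0 + 2 ∣ x 0 ^ 2 ^ n + 1 := by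
  rw [← hx.eq_pow n le_rfl]
  obtain ⟨-, -, h1, h2, h3, h4⟩ := hx
  simp only [Fin.zero_eta] at h1
  have h02 : x ⟨n + 2, by omega⟩ = x 0 + 2 := by omega
  rw [← h02, h3]
  exact Dvd.intro _ h4

theorem eq_fermatTuple (hx : FermatSystem n x) : x = fermatTuple n (x 0) := by
  have hxn := hx.eq_pow n le_rfl
  obtain ⟨-, -, h1, h2, h3, h4⟩ := id hx
  simp only [Fin.zero_eta] at h1
  funext i
  rcases Fin.val_le_or_eq_last_four i with hi | rfl | rfl | rfl | rfl
  · simp [fermatTuple, hi, hx.eq_pow i hi]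
  all_goals simp [fermatTuple]
  · omega
  · omega
  · omega
  · have h02 : x ⟨n + 2, by omega⟩ = x 0 + 2 := by omega
    rw [← hxn, h3, ← h4, h02, Nat.mul_div_cancel_left _ (by omega)]

theorem head_eq (hn : 0 < n) (hp : (2 ^ 2 ^ n + 1).Prime) (hx : FermatSystem n x) :
    x 0 = 2 ^ 2 ^ n - 1 := by
  have hdvd := (add_two_dvd_pow_add_one_iff (Nat.even_pow.2 ⟨even_two, hn.ne'⟩)).1 hx.add_two_dvd
  rcases hp.eq_one_or_self_of_dvd _ hdvd with h | h <;> omega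

theorem le_apply_n_add_three (hx : FermatSystem n x) (i : Fin (n + 5)) :
    x i ≤ x ⟨n + 3, by omega⟩ := by
  have hxn := hx.eq_pow n le_rfl
  obtain ⟨hpos, -, h1, h2, h3, h4⟩ := id hx
  simp only [Fin.zero_eta] at h1
  rcases Fin.val_le_or_eq_last_four i with hi | rfl | rfl | rfl | rfl
  · calc x i = x 0 ^ 2 ^ (i : ℕ) := hx.eq_pow i hi
      _ ≤ x 0 ^ 2 ^ n := Nat.pow_le_pow_right (hpos 0) (Nat.pow_le_pow_right two_pos hi)
      _ ≤ x ⟨n + 3, by omega⟩ := by omega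
  · have := Nat.le_self_pow (pow_ne_zero n two_ne_zero) (x 0)
    omega
  · exact Nat.le_of_dvd (hpos _) (Dvd.intro _ h4)
  · exact le_rfl
  · exact Nat.le_of_dvd (hpos _) (Dvd.intro_left _ h4)

end FermatSystem

theorem fermatSystem_fermatTuple {n a : ℕ} (ha : 0 < a) (hdvd : a + 2 ∣ a ^ 2 ^ n + 1) :
    FermatSystem n (fermatTuple n a) := by
  obtain ⟨q, hq⟩ := hdvd
  have hdiv : (a ^ 2 ^ n + 1) / (a + 2) = q := by rw [hq, Nat.mul_div_cancel_left _ (by omega)]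
  have hqpos : 0 < q := Nat.pos_of_ne_zero (by rintro rfl; simp at hq)
  refine ⟨fun i => ?_, fun i hi => ?_, ?_, ?_, ?_, ?_⟩
  · rcases Fin.val_le_or_eq_last_four i with hi | rfl | rfl | rfl | rfl
    · simp [fermatTuple, hi, ha]
    all_goals simp [fermatTuple, hdiv, hqpos]
  · simp [fermatTuple, hi.le, Nat.succ_le_of_lt hi, ← pow_add, pow_succ, mul_two]
  all_goals simp [fermatTuple, hq]

theorem fermat_system_unique_max (n : ℕ) (hn : 0 < n)
    (hp : Nat.Prime (2 ^ 2 ^ n + 1)) :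
    (∃! x : Fin (n + 5) → ℕ, FermatSystem n x) ∧
    ∀ x : Fin (n + 5) → ℕ, FermatSystem n x →
      x ⟨n + 3, by omega⟩ = (2 ^ 2 ^ n - 1) ^ 2 ^ n + 1 ∧
      ∀ i, x i ≤ x ⟨n + 3, by omega⟩ := by
  have htwo : 2 ≤ 2 ^ 2 ^ n := Nat.le_self_pow (pow_ne_zero n two_ne_zero) 2
  have hdvd : 2 ^ 2 ^ n - 1 + 2 ∣ (2 ^ 2 ^ n - 1) ^ 2 ^ n + 1 := by
    rw [add_two_dvd_pow_add_one_iff (Nat.even_pow.2 ⟨even_two, hn.ne'⟩)]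
    exact dvd_of_eq (by omega)
  have hsol (x : Fin (n + 5) → ℕ) (hx : FermatSystem n x) : x = fermatTuple n (2 ^ 2 ^ n - 1) := by
    rw [hx.eq_fermatTuple, hx.head_eq hn hp]
  refine ⟨⟨_, fermatSystem_fermatTuple (by omega) hdvd, hsol⟩,
    fun x hx => ⟨?_, hx.le_apply_n_add_three⟩⟩
  rw [hsol x hx]
  simp [fermatTuple]
end

section
/- With θ as defined, θ(2) = 2. -/
/-- An equation of `E_n`: `Sum.inl (i, j, k)` means `xᵢ · xⱼ = x_k`,
`Sum.inr (i, k)` means `xᵢ + 1 = x_k`. -/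
def SatisfiesEq (n : ℕ) (x : Fin n → ℕ)
    (e : (Fin n × Fin n × Fin n) ⊕ (Fin n × Fin n)) : Prop :=
  match e with
  | Sum.inl (i, j, k) => x i * x j = x k
  | Sum.inr (i, k) => x i + 1 = x k

/-- `x` is a positive-integer solution of the system `S ⊆ E_n`. -/
def IsSolution (n : ℕ) (S : Set ((Fin n × Fin n × Fin n) ⊕ (Fin n × Fin n)))
    (x : Fin n → ℕ) : Prop :=
  (∀ i, 0 < x i) ∧ ∀ e ∈ S, SatisfiesEq n x e

/-- `θ(n)`: the smallest positive integer `b` such that every system `S ⊆ E_n` which is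
solvable in positive integers and has only finitely many solutions in positive integers
has a solution with all entries in `[1, b]`. -/
noncomputable def theta (n : ℕ) : ℕ :=
  sInf { b : ℕ | 0 < b ∧ ∀ S : Set ((Fin n × Fin n × Fin n) ⊕ (Fin n × Fin n)),
    (∃ x, IsSolution n S x) → { x | IsSolution n S x }.Finite →
    ∃ x, IsSolution n S x ∧ ∀ i, x i ≤ b }

/-!
Without a successor equation `(1, 1)` satisfies every product equation. If a positive solution
satisfies `xᵢ + 1 = x_k`, then either `xᵢ = 1` and it is the model `xᵢ = 1, x_k = 2` itself, or
`xᵢ ≥ 2` and it satisfies no product equation at all, so that model satisfies all its equations.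
Hence `2` bounds every solvable system in two variables. Conversely, the system
`{x₀ + 1 = x₁} ∪ {xᵢ · xᵢ = xᵢ : i ≠ 1}` has the single solution `(1, 2, 1, …, 1)`.
-/

def IsThetaBound (n b : ℕ) : Prop :=
  0 < b ∧ ∀ S : Set ((Fin n × Fin n × Fin n) ⊕ (Fin n × Fin n)),
    (∃ x, IsSolution n S x) → { x | IsSolution n S x }.Finite →
    ∃ x, IsSolution n S x ∧ ∀ i, x i ≤ b

lemma theta_eq_sInf (n : ℕ) : theta n = sInf { b | IsThetaBound n b } := rfl

lemma IsSolution.of_satisfiesEq_imp {n : ℕ} {S : Set ((Fin n × Fin n × Fin n) ⊕ (Fin n × Fin n))}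
    {x y : Fin n → ℕ} (hx : IsSolution n S x) (hy : ∀ i, 0 < y i)
    (hxy : ∀ e, SatisfiesEq n x e → SatisfiesEq n y e) : IsSolution n S y :=
  ⟨hy, fun e he => hxy e (hx.2 e he)⟩

lemma satisfiesEq_one_of_forall_succ_ne {n : ℕ} {x : Fin n → ℕ} (hx : ∀ i k, x i + 1 ≠ x k)
    {e : (Fin n × Fin n × Fin n) ⊕ (Fin n × Fin n)} (he : SatisfiesEq n x e) :
    SatisfiesEq n 1 e := by
  rcases e with ⟨i, j, k⟩ | ⟨i, k⟩
  · simp [SatisfiesEq]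
  · exact absurd he (hx i k)

lemma satisfiesEq_of_succ {x : Fin 2 → ℕ} (hx : ∀ i, 0 < x i) {i k : Fin 2}
    (hik : x i + 1 = x k) {e : (Fin 2 × Fin 2 × Fin 2) ⊕ (Fin 2 × Fin 2)}
    (he : SatisfiesEq 2 x e) : SatisfiesEq 2 (fun l => if l = k then 2 else 1) e := by
  have := hx 0
  have := hx 1
  obtain hi | hi := Nat.lt_or_ge (x i) 2 <;>
    rcases e with ⟨a, b, c⟩ | ⟨a, c⟩ <;> simp only [SatisfiesEq] at he ⊢ <;>
    fin_cases i <;> fin_cases k <;> fin_cases a <;> try fin_cases b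
  all_goals fin_cases c <;> simp at hi hik he ⊢ <;> nlinarith

lemma exists_satisfiesEq_imp_le_two {x : Fin 2 → ℕ} (hx : ∀ i, 0 < x i) :
    ∃ y : Fin 2 → ℕ, (∀ i, 0 < y i ∧ y i ≤ 2) ∧ ∀ e, SatisfiesEq 2 x e → SatisfiesEq 2 y e := by
  by_cases hsucc : ∃ i k, x i + 1 = x k
  · obtain ⟨i, k, hik⟩ := hsucc
    refine ⟨fun l => if l = k then 2 else 1, fun l => ?_, fun e => satisfiesEq_of_succ hx hik⟩
    dsimp only
    split_ifs <;> simp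
  · push Not at hsucc
    exact ⟨1, by simp, fun e => satisfiesEq_one_of_forall_succ_ne hsucc⟩

lemma isThetaBound_two_two : IsThetaBound 2 2 :=
  ⟨two_pos, fun _ ⟨_, hx⟩ _ =>
    let ⟨y, hy, hxy⟩ := exists_satisfiesEq_imp_le_two hx.1
    ⟨y, hx.of_satisfiesEq_imp (fun i => (hy i).1) hxy, fun i => (hy i).2⟩⟩

lemma two_le_of_isThetaBound {n b : ℕ} (hb : IsThetaBound (n + 2) b) : 2 ≤ b := by
  let S : Set ((Fin (n + 2) × Fin (n + 2) × Fin (n + 2)) ⊕ (Fin (n + 2) × Fin (n + 2))) :=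
    insert (Sum.inr (0, 1)) (Set.range fun i : {i // i ≠ 1} => Sum.inl (i.1, i.1, i.1))
  let y : Fin (n + 2) → ℕ := fun i => if i = 1 then 2 else 1
  have hy : IsSolution (n + 2) S y := by
    refine ⟨fun i => by positivity, ?_⟩
    rintro e (rfl | ⟨⟨i, hi⟩, rfl⟩) <;> simp [SatisfiesEq, y, *]
  have huniq : ∀ z, IsSolution (n + 2) S z → z = y := by
    rintro z ⟨hz, hzS⟩
    have hidem : ∀ i, i ≠ 1 → z i = 1 := fun i hi => by
      have : z i * z i = z i := hzS _ (Or.inr ⟨⟨i, hi⟩, rfl⟩)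
      simpa [(hz i).ne'] using this
    have hsucc : z 0 + 1 = z 1 := hzS _ (Or.inl rfl)
    funext i
    by_cases hi : i = 1
    · simp [y, hi, ← hsucc, hidem 0 zero_ne_one]
    · simp [y, hi, hidem i hi]
  obtain ⟨z, hz, hzb⟩ :=
    hb.2 S ⟨y, hy⟩ (Set.subsingleton_of_forall_eq y huniq).finite
  simpa [huniq z hz, y] using hzb 1

theorem theta_two : theta 2 = 2 := by
  rw [theta_eq_sInf]
  exact le_antisymm (Nat.sInf_le isThetaBound_two_two)
    (le_csInf ⟨2, isThetaBound_two_two⟩ fun _ => two_le_of_isThetaBound (n := 0))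
end

section
/- With θ as defined, θ(n) ≥ 2^(2^(n−2)) for every integer n ≥ 3. -/
/-- The witness system. -/
def sysEq (n : ℕ) : Set ((Fin n × Fin n × Fin n) ⊕ (Fin n × Fin n)) :=
  {e | (∃ i : Fin n, (i : ℕ) = 0 ∧ e = Sum.inl (i, i, i)) ∨
       (∃ i k : Fin n, (i : ℕ) = 0 ∧ (k : ℕ) = 1 ∧ e = Sum.inr (i, k)) ∨
       (∃ i k : Fin n, 1 ≤ (i : ℕ) ∧ (k : ℕ) = (i : ℕ) + 1 ∧ e = Sum.inl (i, i, k))}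

/-- The unique solution of the witness system. -/
def solFun (n : ℕ) : Fin n → ℕ := fun i => if (i : ℕ) = 0 then 1 else 2 ^ 2 ^ ((i : ℕ) - 1)

lemma solFun_isSolution (n : ℕ) : IsSolution n (sysEq n) (solFun n) := by
  constructor
  · intro i
    unfold solFun
    split <;> positivity
  · rintro e (⟨i, hi, rfl⟩ | ⟨i, k, hi, hk, rfl⟩ | ⟨i, k, hi, hk, rfl⟩)
    · simp [SatisfiesEq, solFun, hi]
    · simp [SatisfiesEq, solFun, hi, hk]
    · simp only [SatisfiesEq, solFun]
      rw [if_neg (by omega), if_neg (by omega), ← pow_add]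
      congr 1
      have h2 : (k : ℕ) - 1 = ((i : ℕ) - 1) + 1 := by omega
      rw [h2, pow_succ]
      ring

lemma sol_unique (n : ℕ) (x : Fin n → ℕ) (hx : IsSolution n (sysEq n) x) :
    ∀ i, x i = solFun n i := by
  obtain ⟨hpos, heq⟩ := hx
  have key : ∀ m : ℕ, ∀ hm : m < n, x ⟨m, hm⟩ = solFun n ⟨m, hm⟩ := by
    intro m
    induction m with
    | zero =>
      intro hm
      have h0 := heq (Sum.inl (⟨0, hm⟩, ⟨0, hm⟩, ⟨0, hm⟩))
        (Or.inl ⟨⟨0, hm⟩, rfl, rfl⟩)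
      simp only [SatisfiesEq] at h0
      have hp := hpos ⟨0, hm⟩
      have h1 : x ⟨0, hm⟩ = 1 := by nlinarith
      simp [solFun, h1]
    | succ m ih =>
      intro hm
      have hmn : m < n := by omega
      have hxm := ih hmn
      cases m with
      | zero =>
        have h1 := heq (Sum.inr (⟨0, hmn⟩, ⟨0 + 1, hm⟩))
          (Or.inr (Or.inl ⟨⟨0, hmn⟩, ⟨0 + 1, hm⟩, rfl, rfl, rfl⟩))
        simp only [SatisfiesEq] at h1
        simp only [solFun, Fin.val_mk] at hxm ⊢
        norm_num at hxm h1 ⊢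
        omega
      | succ m' =>
        have h1 := heq (Sum.inl (⟨m' + 1, hmn⟩, ⟨m' + 1, hmn⟩, ⟨m' + 2, hm⟩))
          (Or.inr (Or.inr ⟨⟨m' + 1, hmn⟩, ⟨m' + 2, hm⟩, by simp, by simp, rfl⟩))
        simp only [SatisfiesEq] at h1
        rw [hxm] at h1
        rw [← h1]
        simp only [solFun, Fin.val_mk]
        rw [if_neg (by omega), if_neg (by omega), ← pow_add]
        congr 1
        have h2 : (m' + 2) - 1 = (m' + 1 - 1) + 1 := by omega
        rw [h2, pow_succ]
        ring
  intro i
  have := key i.val i.isLt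
  simpa using this

theorem theta_lower_bound (n : ℕ) (hn : 3 ≤ n) : 2 ^ 2 ^ (n - 2) ≤ theta n := by
  classical
  set T := { b : ℕ | 0 < b ∧ ∀ S : Set ((Fin n × Fin n × Fin n) ⊕ (Fin n × Fin n)),
    (∃ x, IsSolution n S x) → { x | IsSolution n S x }.Finite →
    ∃ x, IsSolution n S x ∧ ∀ i, x i ≤ b } with hT
  have hne : T.Nonempty := by
    let g : Set ((Fin n × Fin n × Fin n) ⊕ (Fin n × Fin n)) → ℕ :=
      fun S => if h : ∃ x, IsSolution n S x then Finset.univ.sup h.choose else 0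
    let 𝒮 : Set (Set ((Fin n × Fin n × Fin n) ⊕ (Fin n × Fin n))) :=
      {S | ∃ x, IsSolution n S x}
    have h𝒮 : 𝒮.Finite := Set.toFinite _
    refine ⟨max 1 (h𝒮.toFinset.sup g), ?_, ?_⟩
    · exact lt_of_lt_of_le one_pos (le_max_left _ _)
    · intro S hsolv _
      refine ⟨hsolv.choose, hsolv.choose_spec, ?_⟩
      intro i
      have h1 : hsolv.choose i ≤ g S := by
        simp only [g, dif_pos hsolv]
        exact Finset.le_sup (Finset.mem_univ i)
      have h2 : g S ≤ h𝒮.toFinset.sup g :=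
        Finset.le_sup (by simp [Set.Finite.mem_toFinset, 𝒮]; exact hsolv)
      exact le_trans h1 (le_trans h2 (le_max_right _ _))
  have hmem : theta n ∈ T := Nat.sInf_mem hne
  obtain ⟨hpos, hb⟩ := hmem
  have hfin : { x | IsSolution n (sysEq n) x }.Finite := by
    apply Set.Finite.subset (Set.finite_singleton (solFun n))
    intro x hx
    exact funext (sol_unique n x hx)
  obtain ⟨x, hxsol, hxle⟩ := hb (sysEq n) ⟨solFun n, solFun_isSolution n⟩ hfin
  have hlt : n - 1 < n := by omega
  have h1 : x ⟨n - 1, hlt⟩ = solFun n ⟨n - 1, hlt⟩ := sol_unique n x hxsol _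
  have h2 : solFun n ⟨n - 1, hlt⟩ = 2 ^ 2 ^ (n - 2) := by
    simp only [solFun, Fin.val_mk]
    rw [if_neg (by omega)]
    have h3 : n - 1 - 1 = n - 2 := by omega
    rw [h3]
  calc 2 ^ 2 ^ (n - 2) = x ⟨n - 1, hlt⟩ := by rw [h1, h2]
    _ ≤ theta n := hxle _
end

section
/- With θ as defined, for every integer n > 5, if 2^(2^(n−5)) + 1 is prime, then θ(n) ≥ (2^(2^(n−5)) − 1)^(2^(n−5)) + 1. -/
/-! ### Auxiliary constructions -/

/-- The witness system on `m+5` variables. -/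
def mySys (m : ℕ) :
    Set ((Fin (m+5) × Fin (m+5) × Fin (m+5)) ⊕ (Fin (m+5) × Fin (m+5))) :=
  {e | ∃ i : ℕ, ∃ h : i < m,
      e = Sum.inl (⟨i, by omega⟩, ⟨i, by omega⟩, ⟨i+1, by omega⟩)} ∪
  {Sum.inr (⟨m, by omega⟩, ⟨m+1, by omega⟩),
   Sum.inr (⟨0, by omega⟩, ⟨m+2, by omega⟩),
   Sum.inr (⟨m+2, by omega⟩, ⟨m+3, by omega⟩),
   Sum.inl (⟨m+3, by omega⟩, ⟨m+4, by omega⟩, ⟨m+1, by omega⟩)}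

/-- The unique positive solution of `mySys m`. -/
def mySol (m : ℕ) : Fin (m+5) → ℕ := fun j =>
  if j.val ≤ m then (2^2^m - 1)^(2^(j.val))
  else if j.val = m+1 then (2^2^m - 1)^(2^m) + 1
  else if j.val = m+2 then 2^2^m
  else if j.val = m+3 then 2^2^m + 1
  else ((2^2^m - 1)^(2^m) + 1) / (2^2^m + 1)

lemma mySol_le (m i : ℕ) (h1 : i ≤ m) (h2 : i < m+5) :
    mySol m ⟨i, h2⟩ = (2^2^m - 1)^(2^i) := by
  simp only [mySol]
  rw [if_pos h1]

lemma mySol_m1 (m : ℕ) : mySol m ⟨m+1, by omega⟩ = (2^2^m - 1)^(2^m) + 1 := by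
  simp only [mySol]
  rw [if_neg (by omega)]
  simp

lemma mySol_m2 (m : ℕ) : mySol m ⟨m+2, by omega⟩ = 2^2^m := by
  simp only [mySol]
  rw [if_neg (by omega), if_neg (by omega)]
  simp

lemma mySol_m3 (m : ℕ) : mySol m ⟨m+3, by omega⟩ = 2^2^m + 1 := by
  simp only [mySol]
  rw [if_neg (by omega), if_neg (by omega), if_neg (by omega)]
  simp

lemma mySol_m4 (m : ℕ) :
    mySol m ⟨m+4, by omega⟩ = ((2^2^m - 1)^(2^m) + 1) / (2^2^m + 1) := by
  simp only [mySol]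
  rw [if_neg (by omega), if_neg (by omega), if_neg (by omega), if_neg (by omega)]

lemma dvd_shift (m c : ℕ) (hm : 1 ≤ m) :
    (c+2) ∣ c^(2^m) + 1 ↔ (c+2) ∣ 2^(2^m) + 1 := by
  have h2 : NeZero (c+2) := ⟨by omega⟩
  rw [← ZMod.natCast_eq_zero_iff _ (c+2),
      ← ZMod.natCast_eq_zero_iff _ (c+2)]
  push_cast
  have hc : (c : ZMod (c+2)) = -2 := by
    have h0 : ((c+2 : ℕ) : ZMod (c+2)) = 0 := ZMod.natCast_self _
    push_cast at h0
    linear_combination h0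
  have he : Even (2^m) := Nat.even_pow.mpr ⟨even_two, by omega⟩
  rw [hc, he.neg_pow]

lemma four_le (m : ℕ) (hm : 1 ≤ m) : 4 ≤ 2^2^m := by
  calc (4:ℕ) = 2^2 := rfl
  _ ≤ 2^2^m := Nat.pow_le_pow_right (by omega)
      (by calc (2:ℕ) = 2^1 := rfl
          _ ≤ 2^m := Nat.pow_le_pow_right (by omega) hm)

lemma fermat_dvd (m : ℕ) (hm : 1 ≤ m) :
    (2^2^m + 1) ∣ (2^2^m - 1)^(2^m) + 1 := by
  have h4 := four_le m hm
  have hc2 : (2^2^m - 1) + 2 = 2^2^m + 1 := by omega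
  have := (dvd_shift m (2^2^m - 1) hm).mpr (hc2 ▸ dvd_rfl)
  rwa [hc2] at this

lemma sol_is (m : ℕ) (hm : 1 ≤ m) : IsSolution (m+5) (mySys m) (mySol m) := by
  have h4 := four_le m hm
  have hF := fermat_dvd m hm
  constructor
  · rintro ⟨j, hj⟩
    rcases (show j ≤ m ∨ j = m+1 ∨ j = m+2 ∨ j = m+3 ∨ j = m+4 by omega) with
      h | rfl | rfl | rfl | rfl
    · rw [mySol_le m j h hj]; exact pow_pos (by omega) _
    · rw [mySol_m1]; omega
    · rw [mySol_m2]; omega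
    · rw [mySol_m3]; omega
    · rw [mySol_m4]
      exact Nat.div_pos (Nat.le_of_dvd (by positivity) hF) (by omega)
  · intro e he
    rcases he with ⟨i, hi, rfl⟩ | he
    · show mySol m ⟨i, by omega⟩ * mySol m ⟨i, by omega⟩ = mySol m ⟨i+1, by omega⟩
      rw [mySol_le m i (by omega) (by omega), mySol_le m (i+1) (by omega) (by omega),
        ← pow_add]
      congr 1
      rw [pow_succ]; ring
    · simp only [Set.mem_insert_iff, Set.mem_singleton_iff] at he
      rcases he with rfl | rfl | rfl | rfl
      · show mySol m ⟨m, by omega⟩ + 1 = mySol m ⟨m+1, by omega⟩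
        rw [mySol_le m m le_rfl, mySol_m1]
      · show mySol m ⟨0, by omega⟩ + 1 = mySol m ⟨m+2, by omega⟩
        rw [mySol_le m 0 (by omega), mySol_m2]
        simp only [pow_zero, pow_one]
        omega
      · show mySol m ⟨m+2, by omega⟩ + 1 = mySol m ⟨m+3, by omega⟩
        rw [mySol_m2, mySol_m3]
      · show mySol m ⟨m+3, by omega⟩ * mySol m ⟨m+4, by omega⟩ = mySol m ⟨m+1, by omega⟩
        rw [mySol_m3, mySol_m4, mySol_m1]
        exact Nat.mul_div_cancel' hF

lemma core (m c q : ℕ) (hm : 1 ≤ m) (hp : Nat.Prime (2^2^m + 1))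
    (h : (c + 2) * q = c ^ 2^m + 1) : c = 2^2^m - 1 := by
  have h4 := four_le m hm
  have hdvd : (c + 2) ∣ c ^ 2^m + 1 := ⟨q, h.symm⟩
  have hdF : (c + 2) ∣ 2^2^m + 1 := (dvd_shift m c hm).mp hdvd
  rcases hp.eq_one_or_self_of_dvd _ hdF with h1 | h1 <;> omega

lemma sol_unique_s17 (m : ℕ) (hm : 1 ≤ m) (hp : Nat.Prime (2^2^m + 1))
    (y : Fin (m+5) → ℕ) (hy : IsSolution (m+5) (mySys m) y) : y = mySol m := by
  obtain ⟨hpos, heq⟩ := hy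
  have i0 : 0 < m + 5 := by omega
  have im : m < m + 5 := by omega
  have i1 : m + 1 < m + 5 := by omega
  have i2 : m + 2 < m + 5 := by omega
  have i3 : m + 3 < m + 5 := by omega
  have i4 : m + 4 < m + 5 := by omega
  have chain : ∀ i, ∀ _h : i ≤ m, ∀ hilt : i < m + 5,
      y ⟨i, hilt⟩ = (y ⟨0, i0⟩) ^ 2^i := by
    intro i
    induction i with
    | zero => intro _ _; rw [pow_zero, pow_one]
    | succ i ih =>
      intro h hilt
      have e1 : y ⟨i, by omega⟩ * y ⟨i, by omega⟩ = y ⟨i+1, hilt⟩ :=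
        heq _ (Set.mem_union_left _ ⟨i, by omega, rfl⟩)
      rw [← e1, ih (by omega) (by omega), ← pow_add]
      congr 1
      rw [pow_succ]; ring
  have e2 : y ⟨m, im⟩ + 1 = y ⟨m+1, i1⟩ :=
    heq _ (Set.mem_union_right _ (Set.mem_insert _ _))
  have e3 : y ⟨0, i0⟩ + 1 = y ⟨m+2, i2⟩ :=
    heq _ (Set.mem_union_right _ (Set.mem_insert_of_mem _ (Set.mem_insert _ _)))
  have e4 : y ⟨m+2, i2⟩ + 1 = y ⟨m+3, i3⟩ :=
    heq _ (Set.mem_union_right _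
      (Set.mem_insert_of_mem _ (Set.mem_insert_of_mem _ (Set.mem_insert _ _))))
  have e5 : y ⟨m+3, i3⟩ * y ⟨m+4, i4⟩ = y ⟨m+1, i1⟩ :=
    heq _ (Set.mem_union_right _
      (Set.mem_insert_of_mem _ (Set.mem_insert_of_mem _
        (Set.mem_insert_of_mem _ rfl))))
  have hym : y ⟨m, im⟩ = (y ⟨0, i0⟩) ^ 2^m := chain m le_rfl im
  have hm1 : y ⟨m+1, i1⟩ = (y ⟨0, i0⟩) ^ 2^m + 1 := by omega
  have hm3 : y ⟨m+3, i3⟩ = y ⟨0, i0⟩ + 2 := by omega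
  have e6 := e5
  rw [hm3, hm1] at e6
  have hcval : y ⟨0, i0⟩ = 2^2^m - 1 := core m _ _ hm hp e6
  have h4 := four_le m hm
  funext j
  obtain ⟨j, hj⟩ := j
  rcases (show j ≤ m ∨ j = m+1 ∨ j = m+2 ∨ j = m+3 ∨ j = m+4 by omega) with
    h | rfl | rfl | rfl | rfl
  · rw [chain j h hj, hcval, mySol_le m j h hj]
  · rw [hm1, hcval, mySol_m1]
  · rw [mySol_m2]; omega
  · rw [mySol_m3]; omega
  · have hd : y ⟨m+4, hj⟩ = ((y ⟨0, i0⟩ + 2) * y ⟨m+4, hj⟩) / (y ⟨0, i0⟩ + 2) :=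
      (Nat.mul_div_cancel_left _ (by omega)).symm
    rw [mySol_m4, hd, e6, hcval]
    congr 1
    omega

lemma theta_set_mem (n : ℕ) :
    ∃ b : ℕ, 0 < b ∧ ∀ S : Set ((Fin n × Fin n × Fin n) ⊕ (Fin n × Fin n)),
      (∃ x, IsSolution n S x) → { x | IsSolution n S x }.Finite →
      ∃ x, IsSolution n S x ∧ ∀ i, x i ≤ b := by
  classical
  set T := (Fin n × Fin n × Fin n) ⊕ (Fin n × Fin n)
  let g : Set T → ℕ := fun S =>
    if h : ∃ x, IsSolution n S x then Finset.univ.sup h.choose else 0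
  obtain ⟨B, hB⟩ := Set.Finite.bddAbove (Set.finite_range g)
  refine ⟨B + 1, Nat.succ_pos B, fun S hS _ => ⟨hS.choose, hS.choose_spec, fun i => ?_⟩⟩
  have h1 : hS.choose i ≤ g S := by
    simp only [g, dif_pos hS]
    exact Finset.le_sup (Finset.mem_univ i)
  have h2 : g S ≤ B := hB (Set.mem_range_self S)
  omega

theorem theta_ge_of_fermat_prime (n : ℕ) (hn : 5 < n)
    (hp : Nat.Prime (2 ^ 2 ^ (n - 5) + 1)) :
    (2 ^ 2 ^ (n - 5) - 1) ^ 2 ^ (n - 5) + 1 ≤ theta n := by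
  obtain ⟨m, rfl⟩ : ∃ m, n = m + 5 := ⟨n - 5, by omega⟩
  have h5 : m + 5 - 5 = m := by omega
  rw [h5] at hp ⊢
  have hm : 1 ≤ m := by omega
  obtain ⟨b0, hb0⟩ := theta_set_mem (m+5)
  refine le_csInf ⟨b0, hb0⟩ ?_
  rintro b ⟨hbpos, hb⟩
  have hfin : { x | IsSolution (m+5) (mySys m) x }.Finite :=
    Set.Finite.subset (Set.finite_singleton (mySol m))
      (fun y hy => sol_unique_s17 m hm hp y hy)
  obtain ⟨x, hx, hxb⟩ := hb (mySys m) ⟨mySol m, sol_is m hm⟩ hfin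
  have hxval : x = mySol m := sol_unique_s17 m hm hp x hx
  have := hxb ⟨m+1, by omega⟩
  rw [hxval, mySol_m1] at this
  exact this
end

section
/- With θ as defined, for every integer n > 9, if θ(n) < (2^(2^(n−5)) − 1)^(2^(n−5)) + 1, then 2^(2^(n−5)) + 1 is composite. -/
open Filter Finset

lemma add_dvd_pow_sub_pow_of_even {R : Type*} [CommRing R] (a b : R) {e : ℕ} (he : Even e) :
    a + b ∣ a ^ e - b ^ e := by
  simpa [he.neg_pow] using sub_dvd_pow_sub_pow a (-b) e

lemma Nat.add_dvd_pow_add_iff_of_even {a b c e : ℕ} (he : Even e) :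
    a + b ∣ a ^ e + c ↔ a + b ∣ b ^ e + c := by
  zify
  rw [show (a : ℤ) ^ e + c = (a ^ e - b ^ e) + (b ^ e + c) by ring]
  exact dvd_add_right (add_dvd_pow_sub_pow_of_even _ _ he)

lemma Fin.forall_sq_eq_succ_iff {M : Type*} [Monoid M] {m : ℕ} (u : Fin (m + 1) → M) :
    (∀ i : Fin m, u i.castSucc ^ 2 = u i.succ) ↔ ∀ i, u i = u 0 ^ 2 ^ (i : ℕ) := by
  constructor
  · intro h i
    induction i using Fin.induction with
    | zero => simp
    | succ i ih => rw [← h, ih, ← pow_mul, Fin.val_succ, pow_succ, Fin.val_castSucc]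
  · intro h i
    rw [h i.succ, h i.castSucc, ← pow_mul, Fin.val_succ, pow_succ, Fin.val_castSucc]

section Theta

variable {n : ℕ} {S : Set ((Fin n × Fin n × Fin n) ⊕ (Fin n × Fin n))}

-- Since `sInf ∅ = 0`, this is what makes `theta n` an admissible bound.
lemma exists_pos_bound_isSolution (n : ℕ) :
    ∃ b, 0 < b ∧ ∀ S : Set ((Fin n × Fin n × Fin n) ⊕ (Fin n × Fin n)),
      (∃ x, IsSolution n S x) → ∃ x, IsSolution n S x ∧ ∀ i, x i ≤ b := by
  have h : ∀ S, ∀ᶠ b in atTop,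
      (∃ x, IsSolution n S x) → ∃ x, IsSolution n S x ∧ ∀ i, x i ≤ b := by
    intro S
    by_cases hS : ∃ x, IsSolution n S x
    · obtain ⟨x, hx⟩ := hS
      filter_upwards [eventually_ge_atTop (univ.sup x)] with b hb _
      exact ⟨x, hx, fun i => (le_sup (mem_univ i)).trans hb⟩
    · exact .of_forall fun _ h => absurd h hS
  exact ((eventually_gt_atTop 0).and (eventually_all.2 h)).exists

lemma exists_isSolution_le_theta (hS : ∃ x, IsSolution n S x)
    (hfin : {x | IsSolution n S x}.Finite) : ∃ x, IsSolution n S x ∧ ∀ i, x i ≤ theta n := by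
  obtain ⟨b, hb, hbound⟩ := exists_pos_bound_isSolution n
  have hmem : theta n ∈ _ := Nat.sInf_mem ⟨b, hb, fun S hS _ => hbound S hS⟩
  exact hmem.2 S hS hfin

lemma le_theta_of_isSolution_iff {x₀ : Fin n → ℕ} (h : ∀ x, IsSolution n S x ↔ x = x₀)
    (i : Fin n) : x₀ i ≤ theta n := by
  have hset : {x | IsSolution n S x} = {x₀} := Set.ext h
  obtain ⟨x, hx, hle⟩ :=
    exists_isSolution_le_theta ⟨x₀, (h x₀).2 rfl⟩ (hset ▸ Set.finite_singleton x₀)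
  exact (h x).1 hx ▸ hle i

end Theta

def fermatSystem (m : ℕ) :
    Set ((Fin (m + 1 + 4) × Fin (m + 1 + 4) × Fin (m + 1 + 4)) ⊕
      (Fin (m + 1 + 4) × Fin (m + 1 + 4))) :=
  let u (i : Fin (m + 1)) : Fin (m + 1 + 4) := Fin.castAdd 4 i
  let v (j : Fin 4) : Fin (m + 1 + 4) := Fin.natAdd (m + 1) j
  Set.range (fun i : Fin m => .inl (u i.castSucc, u i.castSucc, u i.succ)) ∪
    {.inr (u (Fin.last m), v 0), .inr (u 0, v 1), .inr (v 1, v 2), .inl (v 2, v 3, v 0)}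

def fermatSolution (m a : ℕ) : Fin (m + 1 + 4) → ℕ :=
  Fin.append (fun i : Fin (m + 1) => a ^ 2 ^ (i : ℕ))
    ![a ^ 2 ^ m + 1, a + 1, a + 2, (a ^ 2 ^ m + 1) / (a + 2)]

lemma isSolution_fermatSystem_iff {m : ℕ} {x : Fin (m + 1 + 4) → ℕ} :
    IsSolution _ (fermatSystem m) x ↔
      (∀ i, 0 < x i) ∧
      x (Fin.castAdd 4 (Fin.last m)) + 1 = x (Fin.natAdd (m + 1) 0) ∧
      x (Fin.castAdd 4 0) + 1 = x (Fin.natAdd (m + 1) 1) ∧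
      x (Fin.natAdd (m + 1) 1) + 1 = x (Fin.natAdd (m + 1) 2) ∧
      x (Fin.natAdd (m + 1) 2) * x (Fin.natAdd (m + 1) 3) = x (Fin.natAdd (m + 1) 0) ∧
      ∀ i : Fin m, x (Fin.castAdd 4 i.castSucc) ^ 2 = x (Fin.castAdd 4 i.succ) := by
  simp [IsSolution, fermatSystem, SatisfiesEq, sq]

lemma isSolution_fermatSystem_iff_exists {m : ℕ} (hm : 0 < m) {x : Fin (m + 1 + 4) → ℕ} :
    IsSolution _ (fermatSystem m) x ↔
      ∃ a, 0 < a ∧ a + 2 ∣ 2 ^ 2 ^ m + 1 ∧ x = fermatSolution m a := by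
  have heven : Even (2 ^ m) := Nat.even_pow.2 ⟨even_two, hm.ne'⟩
  rw [isSolution_fermatSystem_iff]
  constructor
  · rintro ⟨hpos, hv0, hv1, hv2, hv3, hchain⟩
    set a := x (Fin.castAdd 4 0)
    have hu : ∀ i, x (Fin.castAdd 4 i) = a ^ 2 ^ (i : ℕ) :=
      (Fin.forall_sq_eq_succ_iff fun i => x (Fin.castAdd 4 i)).1 hchain
    have hquot : (a + 2) * x (Fin.natAdd (m + 1) 3) = a ^ 2 ^ m + 1 := by
      rw [show a + 2 = x (Fin.natAdd (m + 1) 2) by omega, hv3, ← hv0, hu, Fin.val_last]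
    refine ⟨a, hpos _, (Nat.add_dvd_pow_add_iff_of_even heven).1 (Dvd.intro _ hquot), ?_⟩
    rw [← Fin.append_castAdd_natAdd (f := x), fermatSolution]
    congr 1
    · exact funext hu
    · ext j
      fin_cases j
      · simp [← hv0, hu]
      · simp [← hv1]
      · simp; omega
      · simp [← hquot]
  · rintro ⟨a, ha, hdvd, rfl⟩
    have hquot : (a + 2) * ((a ^ 2 ^ m + 1) / (a + 2)) = a ^ 2 ^ m + 1 :=
      Nat.mul_div_cancel' ((Nat.add_dvd_pow_add_iff_of_even heven).2 hdvd)
    refine ⟨fun i => ?_, ?_⟩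
    · induction i using Fin.addCases with
      | left i => simp [fermatSolution, ha]
      | right j =>
        have hle : a + 2 ≤ a ^ 2 ^ m + 1 := Nat.le_of_dvd (by positivity) (Dvd.intro _ hquot)
        fin_cases j <;> simp [fermatSolution, Nat.div_pos hle]
    · simp [fermatSolution, hquot, pow_succ, pow_mul]

lemma isSolution_fermatSystem_iff_of_prime {m : ℕ} (hm : 0 < m) (hp : (2 ^ 2 ^ m + 1).Prime)
    {x : Fin (m + 1 + 4) → ℕ} :
    IsSolution _ (fermatSystem m) x ↔ x = fermatSolution m (2 ^ 2 ^ m - 1) := by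
  have h2 : 1 < 2 ^ 2 ^ m := Nat.one_lt_two_pow (by positivity)
  rw [isSolution_fermatSystem_iff_exists hm]
  constructor
  · rintro ⟨a, ha, hdvd, rfl⟩
    have ha2 : a + 2 = 2 ^ 2 ^ m + 1 :=
      (hp.eq_one_or_self_of_dvd _ hdvd).resolve_left (by omega)
    rw [show a = 2 ^ 2 ^ m - 1 by omega]
  · rintro rfl
    exact ⟨_, by omega, by rw [show 2 ^ 2 ^ m - 1 + 2 = 2 ^ 2 ^ m + 1 by omega], rfl⟩

theorem fermat_composite_of_theta_lt (n : ℕ) (hn : 9 < n)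
    (h : theta n < (2 ^ 2 ^ (n - 5) - 1) ^ 2 ^ (n - 5) + 1) :
    ¬ Nat.Prime (2 ^ 2 ^ (n - 5) + 1) := by
  intro hp
  obtain ⟨m, rfl⟩ : ∃ m, n = m + 1 + 4 := ⟨n - 5, by omega⟩
  rw [show m + 1 + 4 - 5 = m by omega] at h hp
  have hle := le_theta_of_isSolution_iff
    (fun _ => isSolution_fermatSystem_iff_of_prime (by omega) hp) (Fin.natAdd (m + 1) 0)
  simp only [fermatSolution, Fin.append_right, Matrix.cons_val_zero] at hle
  omega
end

section
/- For all positive integers x, y, z, the conjunction x + y = z can be expressed by a system of 11 equations, each of the form α + 1 = γ or α · β = γ, in the variables x, y, z and 9 auxiliary variables v₁, …, v₉; specifically: v₁ = z·x, v₂ = v₁ + 1, v₃ = z·y, v₄ = v₃ + 1, v₅ = z·z, v₆ = x·y, v₇ = v₆ + 1, v₈ = v₅·v₇, v₉ = v₈ + 1, and v₂·v₄ = v₉. That is, x + y = z holds if and only if there exist positive integers v₁, …, v₉ satisfying all these equations. -/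
theorem add_as_system (x y z : ℕ) (hx : 0 < x) (hy : 0 < y) (hz : 0 < z) :
    x + y = z ↔ ∃ v₁ v₂ v₃ v₄ v₅ v₆ v₇ v₈ v₉ : ℕ,
      0 < v₁ ∧ 0 < v₂ ∧ 0 < v₃ ∧ 0 < v₄ ∧ 0 < v₅ ∧ 0 < v₆ ∧ 0 < v₇ ∧ 0 < v₈ ∧ 0 < v₉ ∧
      v₁ = z * x ∧ v₂ = v₁ + 1 ∧ v₃ = z * y ∧ v₄ = v₃ + 1 ∧ v₅ = z * z ∧
      v₆ = x * y ∧ v₇ = v₆ + 1 ∧ v₈ = v₅ * v₇ ∧ v₉ = v₈ + 1 ∧ v₂ * v₄ = v₉ := by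
  constructor
  · intro h
    refine ⟨z*x, z*x+1, z*y, z*y+1, z*z, x*y, x*y+1, z*z*(x*y+1), z*z*(x*y+1)+1,
      by positivity, by positivity, by positivity, by positivity, by positivity,
      by positivity, by positivity, by positivity, by positivity,
      rfl, rfl, rfl, rfl, rfl, rfl, rfl, rfl, rfl, ?_⟩
    subst h; ring
  · rintro ⟨a,b,c,d,e,f,g,p,q,-,-,-,-,-,-,-,-,-,h1,h2,h3,h4,h5,h6,h7,h8,h9,h⟩
    subst h1 h2 h3 h4 h5 h6 h7 h8 h9
    have : z * (x + y) = z * z := by nlinarith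
    exact (Nat.eq_of_mul_eq_mul_left hz this)
end
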